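/- arXiv:1004.4921 — 2 statements merged into one kernel-verified Lean document; each statement's English description precedes it below -/
import Mathlib

section
/- With the ILS data as in the context, there exist δ > 0 and η ≥ 0 such that for every real m×n matrix P with ‖P‖_F ≤ δ, the matrix (A+P)ᵀJ(A+P) is positive definite and ‖f(A+P) − f(A) − Df(A)[P]‖₂ ≤ (η/2)·‖P‖_F², where f(M) = (MᵀJM)⁻¹MᵀJb and Df(A)[P] = (AᵀJA)⁻¹(PᵀJr) − (AᵀJA)⁻¹AᵀJ(P·x). -/
open Matrix

/-- Euclidean (ℓ²) norm of a vector. -/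
noncomputable def eNorm {p : Type*} [Fintype p] (v : p → ℝ) : ℝ :=
  Real.sqrt (∑ i, (v i) ^ 2)

/-- Frobenius norm of a matrix. -/
noncomputable def frobNorm {p q : Type*} [Fintype p] [Fintype q]
    (M : Matrix p q ℝ) : ℝ :=
  Real.sqrt (∑ i, ∑ j, (M i j) ^ 2)

/-- Spectral (ℓ² operator) norm of a matrix. -/
noncomputable def specNorm {p q : Type*} [Fintype p] [Fintype q] [DecidableEq q]
    (M : Matrix p q ℝ) : ℝ :=
  ‖LinearMap.toContinuousLinearMap (Matrix.toEuclideanLin M)‖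

/-- Solution of the indefinite least squares problem: `x = (AᵀJA)⁻¹AᵀJb`. -/
noncomputable def ilsX {m n : ℕ} (A : Matrix (Fin m) (Fin n) ℝ)
    (J : Matrix (Fin m) (Fin m) ℝ) (b : Fin m → ℝ) : Fin n → ℝ :=
  ((Aᵀ * J * A)⁻¹ * Aᵀ * J) *ᵥ b

/-- Residual of the indefinite least squares problem: `r = b - Ax`. -/
noncomputable def ilsR {m n : ℕ} (A : Matrix (Fin m) (Fin n) ℝ)
    (J : Matrix (Fin m) (Fin m) ℝ) (b : Fin m → ℝ) : Fin m → ℝ :=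
  b - A *ᵥ (ilsX A J b)

/-- `M₁ = (AᵀJA)⁻¹ ⊗ (Jr)ᵀ`, realized as an `n × (n·m)` matrix whose column
index `(j, k)` corresponds to entry `(k, j)` of the perturbation matrix. -/
noncomputable def ilsM1 {m n : ℕ} (A : Matrix (Fin m) (Fin n) ℝ)
    (J : Matrix (Fin m) (Fin m) ℝ) (b : Fin m → ℝ) :
    Matrix (Fin n) (Fin n × Fin m) ℝ :=
  Matrix.of fun i jk => (Aᵀ * J * A)⁻¹ i jk.1 * (J *ᵥ (ilsR A J b)) jk.2

/-- `M₂ = xᵀ ⊗ (AᵀJA)⁻¹AᵀJ`, realized as an `n × (n·m)` matrix. -/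
noncomputable def ilsM2 {m n : ℕ} (A : Matrix (Fin m) (Fin n) ℝ)
    (J : Matrix (Fin m) (Fin m) ℝ) (b : Fin m → ℝ) :
    Matrix (Fin n) (Fin n × Fin m) ℝ :=
  Matrix.of fun i jk => (ilsX A J b) jk.1 * ((Aᵀ * J * A)⁻¹ * Aᵀ * J) i jk.2

/-! With `B = AᵀJA`, positive definiteness gives a coercivity constant `c` with
`vᵀBv ≥ c‖v‖²` (minimum of the quadratic form on the unit sphere). Coercivity survives
perturbations with `‖J‖‖P‖(2‖A‖ + ‖P‖) ≤ c/2`, which yields positive definiteness of the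
perturbed Gram matrix `B_P = (A+P)ᵀJ(A+P)` and, through `B_P (y − x) = PᵀJr − (A+P)ᵀJPx`,
the first-order bound `‖y − x‖ = O(‖P‖)` for `y = f(A+P)`, `x = f(A)`. The normal equations
`AᵀJr = 0` and `(A+P)ᵀJr' = 0` then give the exact identity
`y − x − Df(A)[P] = B⁻¹(PᵀJ(r' − r) − AᵀJP(y − x))`, whose right-hand side is quadratic in `P`. -/

section Norms

variable {ι κ : Type*} [Fintype ι] [Fintype κ]

lemma eNorm_eq_norm_toLp (v : ι → ℝ) : eNorm v = ‖WithLp.toLp 2 v‖ := by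
  simp [eNorm, EuclideanSpace.norm_eq, sq_abs]

lemma eNorm_nonneg (v : ι → ℝ) : 0 ≤ eNorm v := Real.sqrt_nonneg _

lemma eNorm_pos {v : ι → ℝ} (hv : v ≠ 0) : 0 < eNorm v := by
  rw [eNorm_eq_norm_toLp, norm_pos_iff]
  simpa using hv

lemma frobNorm_nonneg (M : Matrix ι κ ℝ) : 0 ≤ frobNorm M := Real.sqrt_nonneg _

lemma eNorm_sq (v : ι → ℝ) : eNorm v ^ 2 = ∑ i, v i ^ 2 :=
  Real.sq_sqrt (Finset.sum_nonneg fun _ _ => sq_nonneg _)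

lemma frobNorm_sq (M : Matrix ι κ ℝ) : frobNorm M ^ 2 = ∑ i, ∑ j, M i j ^ 2 :=
  Real.sq_sqrt (Finset.sum_nonneg fun _ _ => Finset.sum_nonneg fun _ _ => sq_nonneg _)

lemma eNorm_add_le (u v : ι → ℝ) : eNorm (u + v) ≤ eNorm u + eNorm v := by
  simpa only [eNorm_eq_norm_toLp, WithLp.toLp_add] using norm_add_le _ _

lemma eNorm_neg (v : ι → ℝ) : eNorm (-v) = eNorm v := by
  simpa only [eNorm_eq_norm_toLp, WithLp.toLp_neg] using norm_neg _

lemma eNorm_sub_le (u v : ι → ℝ) : eNorm (u - v) ≤ eNorm u + eNorm v := by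
  simpa only [sub_eq_add_neg, eNorm_neg] using eNorm_add_le u (-v)

lemma frobNorm_transpose (M : Matrix ι κ ℝ) : frobNorm Mᵀ = frobNorm M := by
  rw [frobNorm, frobNorm, Finset.sum_comm]
  rfl

lemma abs_dotProduct_le (u v : ι → ℝ) : |u ⬝ᵥ v| ≤ eNorm u * eNorm v := by
  refine abs_le_of_sq_le_sq ?_ (mul_nonneg (eNorm_nonneg u) (eNorm_nonneg v))
  rw [mul_pow, eNorm_sq, eNorm_sq]
  exact Finset.sum_mul_sq_le_sq_mul_sq _ u v

lemma eNorm_mulVec_le (M : Matrix ι κ ℝ) (v : κ → ℝ) :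
    eNorm (M *ᵥ v) ≤ frobNorm M * eNorm v := by
  refine le_of_sq_le_sq ?_ (mul_nonneg (frobNorm_nonneg M) (eNorm_nonneg v))
  rw [mul_pow, eNorm_sq, frobNorm_sq, eNorm_sq, Finset.sum_mul]
  exact Finset.sum_le_sum fun i _ => Finset.sum_mul_sq_le_sq_mul_sq _ (M i) v

lemma eNorm_mulVec_le_of_le (M : Matrix ι κ ℝ) {v : κ → ℝ} {C : ℝ} (h : eNorm v ≤ C) :
    eNorm (M *ᵥ v) ≤ frobNorm M * C :=
  (eNorm_mulVec_le M v).trans (mul_le_mul_of_nonneg_left h (frobNorm_nonneg M))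

lemma frobNorm_eq_eNorm_uncurry (M : Matrix ι κ ℝ) : frobNorm M = eNorm (Function.uncurry M) := by
  rw [frobNorm, eNorm, Fintype.sum_prod_type]
  rfl

lemma frobNorm_add_le (M N : Matrix ι κ ℝ) : frobNorm (M + N) ≤ frobNorm M + frobNorm N := by
  simp only [frobNorm_eq_eNorm_uncurry]
  exact eNorm_add_le _ _

lemma abs_dotProduct_mulVec_le (u : ι → ℝ) (M : Matrix ι κ ℝ) (v : κ → ℝ) :
    |u ⬝ᵥ (M *ᵥ v)| ≤ eNorm u * (frobNorm M * eNorm v) :=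
  (abs_dotProduct_le _ _).trans <| by gcongr; exacts [eNorm_nonneg u, eNorm_mulVec_le M v]

end Norms

section Coercive

variable {ι κ : Type*} [Fintype ι] [Fintype κ]

def IsCoerciveWith (M : Matrix ι ι ℝ) (c : ℝ) : Prop :=
  ∀ v : ι → ℝ, c * eNorm v ^ 2 ≤ v ⬝ᵥ (M *ᵥ v)

lemma IsCoerciveWith.mono {M : Matrix ι ι ℝ} {c c' : ℝ} (hM : IsCoerciveWith M c) (h : c' ≤ c) :
    IsCoerciveWith M c' :=
  fun v => (mul_le_mul_of_nonneg_right h (sq_nonneg _)).trans (hM v)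

lemma Matrix.PosDef.exists_isCoerciveWith {B : Matrix ι ι ℝ} (hB : B.PosDef) :
    ∃ c > 0, IsCoerciveWith B c := by
  set q : EuclideanSpace ℝ ι → ℝ := fun u => u.ofLp ⬝ᵥ (B *ᵥ u.ofLp)
  suffices h : ∃ c > 0, ∀ u ∈ Metric.sphere 0 1, c ≤ q u by
    obtain ⟨c, hc, hcq⟩ := h
    refine ⟨c, hc, fun v => ?_⟩
    rcases eq_or_ne v 0 with rfl | hv
    · simp [eNorm]
    have he := eNorm_pos hv
    have hu : (eNorm v)⁻¹ • WithLp.toLp 2 v ∈ Metric.sphere (0 : EuclideanSpace ℝ ι) 1 := by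
      simp [norm_smul, ← eNorm_eq_norm_toLp, abs_of_pos he, he.ne']
    have h := hcq _ hu
    simp only [q, WithLp.ofLp_smul, mulVec_smul, smul_dotProduct, dotProduct_smul,
      smul_eq_mul] at h
    field_simp at h
    linarith
  rcases (Metric.sphere (0 : EuclideanSpace ℝ ι) 1).eq_empty_or_nonempty with hempty | hne
  · exact ⟨1, one_pos, by simp [hempty]⟩
  have hq : Continuous q := by fun_prop
  obtain ⟨z, hz, hmin⟩ := (isCompact_sphere _ _).exists_isMinOn hne hq.continuousOn
  refine ⟨q z, ?_, fun u hu => hmin hu⟩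
  have hz0 : z.ofLp ≠ 0 := by simpa using ne_zero_of_mem_sphere one_ne_zero ⟨z, hz⟩
  simpa using hB.dotProduct_mulVec_pos hz0

lemma IsCoerciveWith.posDef {M : Matrix ι ι ℝ} {c : ℝ} (hM : IsCoerciveWith M c) (hc : 0 < c)
    (hsymm : M.IsHermitian) : M.PosDef := by
  refine Matrix.PosDef.of_dotProduct_mulVec_pos hsymm fun v hv => ?_
  have := eNorm_pos hv
  simpa using (by positivity : 0 < c * eNorm v ^ 2).trans_le (hM v)

lemma IsCoerciveWith.mul_eNorm_le {M : Matrix ι ι ℝ} {c : ℝ} (hM : IsCoerciveWith M c)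
    (v : ι → ℝ) : c * eNorm v ≤ eNorm (M *ᵥ v) := by
  rcases eq_or_ne v 0 with rfl | hv
  · simp [eNorm]
  refine le_of_mul_le_mul_right ?_ (eNorm_pos hv)
  calc c * eNorm v * eNorm v = c * eNorm v ^ 2 := by ring
    _ ≤ v ⬝ᵥ (M *ᵥ v) := hM v
    _ ≤ eNorm v * eNorm (M *ᵥ v) := (le_abs_self _).trans (abs_dotProduct_le _ _)
    _ = eNorm (M *ᵥ v) * eNorm v := mul_comm _ _

lemma dotProduct_transpose_mul_mul_mulVec (M : Matrix κ ι ℝ) (J : Matrix κ κ ℝ) (v : ι → ℝ) :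
    v ⬝ᵥ ((Mᵀ * J * M) *ᵥ v) = (M *ᵥ v) ⬝ᵥ (J *ᵥ (M *ᵥ v)) := by
  rw [← mulVec_mulVec, ← mulVec_mulVec, dotProduct_mulVec, vecMul_transpose]

lemma IsCoerciveWith.transpose_mul_mul_add {A : Matrix κ ι ℝ} {J : Matrix κ κ ℝ} {c : ℝ}
    (hA : IsCoerciveWith (Aᵀ * J * A) c) (P : Matrix κ ι ℝ) :
    IsCoerciveWith ((A + P)ᵀ * J * (A + P))
      (c - frobNorm J * frobNorm P * (2 * frobNorm A + frobNorm P)) := by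
  intro v
  have hAv := hA v
  rw [dotProduct_transpose_mul_mul_mulVec] at hAv ⊢
  set e := eNorm v
  have he := eNorm_nonneg v
  have hj := frobNorm_nonneg J
  have ha := frobNorm_nonneg A
  have ht := frobNorm_nonneg P
  have hw : eNorm (A *ᵥ v) ≤ frobNorm A * e := eNorm_mulVec_le A v
  have hp : eNorm (P *ᵥ v) ≤ frobNorm P * e := eNorm_mulVec_le P v
  have hwp : eNorm ((A + P) *ᵥ v) ≤ (frobNorm A + frobNorm P) * e := by
    rw [add_mulVec, add_mul]
    exact (eNorm_add_le _ _).trans (add_le_add hw hp)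
  have cross₁ := (abs_dotProduct_mulVec_le (A *ᵥ v) J (P *ᵥ v)).trans
    (mul_le_mul hw (mul_le_mul_of_nonneg_left hp hj)
      (mul_nonneg hj (eNorm_nonneg _)) (by positivity))
  have cross₂ := (abs_dotProduct_mulVec_le (P *ᵥ v) J ((A + P) *ᵥ v)).trans
    (mul_le_mul hp (mul_le_mul_of_nonneg_left hwp hj)
      (mul_nonneg hj (eNorm_nonneg _)) (by positivity))
  have hsplit : ((A + P) *ᵥ v) ⬝ᵥ (J *ᵥ ((A + P) *ᵥ v)) = (A *ᵥ v) ⬝ᵥ (J *ᵥ (A *ᵥ v))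
      + (A *ᵥ v) ⬝ᵥ (J *ᵥ (P *ᵥ v)) + (P *ᵥ v) ⬝ᵥ (J *ᵥ ((A + P) *ᵥ v)) := by
    simp only [add_mulVec, mulVec_add, add_dotProduct, dotProduct_add]
    ring
  rw [hsplit]
  nlinarith [(abs_le.mp cross₁).1, (abs_le.mp cross₂).1]

end Coercive

section ILS

variable {m n : ℕ} (A P : Matrix (Fin m) (Fin n) ℝ) (J : Matrix (Fin m) (Fin m) ℝ)
  (b : Fin m → ℝ)

-- `Df(A)[P]` for `f(M) = (MᵀJM)⁻¹MᵀJb`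
noncomputable def ilsDeriv : Fin n → ℝ :=
  (Aᵀ * J * A)⁻¹ *ᵥ (Pᵀ *ᵥ (J *ᵥ ilsR A J b))
    - ((Aᵀ * J * A)⁻¹ * Aᵀ * J) *ᵥ (P *ᵥ ilsX A J b)

variable {A J}

lemma mulVec_ilsX (hA : IsUnit (Aᵀ * J * A).det) :
    (Aᵀ * J * A) *ᵥ ilsX A J b = Aᵀ *ᵥ (J *ᵥ b) := by
  rw [ilsX, mulVec_mulVec, ← Matrix.mul_assoc, ← Matrix.mul_assoc, mul_nonsing_inv _ hA,
    Matrix.one_mul, ← mulVec_mulVec]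

lemma transpose_mulVec_ilsR (hA : IsUnit (Aᵀ * J * A).det) :
    Aᵀ *ᵥ (J *ᵥ ilsR A J b) = 0 := by
  have h := mulVec_ilsX b hA
  simp only [← mulVec_mulVec] at h
  rw [ilsR, mulVec_sub, mulVec_sub, h, sub_self]

lemma ilsR_add_sub_ilsR : ilsR (A + P) J b - ilsR A J b
    = -(A *ᵥ (ilsX (A + P) J b - ilsX A J b) + P *ᵥ ilsX (A + P) J b) := by
  simp only [ilsR, add_mulVec, mulVec_sub]
  abel

lemma mulVec_ilsX_add_sub_ilsX (hA : IsUnit (Aᵀ * J * A).det)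
    (hAP : IsUnit ((A + P)ᵀ * J * (A + P)).det) :
    ((A + P)ᵀ * J * (A + P)) *ᵥ (ilsX (A + P) J b - ilsX A J b)
      = Pᵀ *ᵥ (J *ᵥ ilsR A J b) - (A + P)ᵀ *ᵥ (J *ᵥ (P *ᵥ ilsX A J b)) := by
  have hr : b - (A + P) *ᵥ ilsX A J b = ilsR A J b - P *ᵥ ilsX A J b := by
    rw [ilsR, add_mulVec]
    abel
  calc ((A + P)ᵀ * J * (A + P)) *ᵥ (ilsX (A + P) J b - ilsX A J b)
      = (A + P)ᵀ *ᵥ (J *ᵥ (b - (A + P) *ᵥ ilsX A J b)) := by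
        rw [mulVec_sub, mulVec_ilsX b hAP]
        simp only [← mulVec_mulVec, mulVec_sub]
    _ = _ := by
        rw [hr, mulVec_sub J, mulVec_sub, transpose_add, add_mulVec Aᵀ,
          transpose_mulVec_ilsR b hA, zero_add]

lemma ilsX_add_sub_sub_ilsDeriv (hA : IsUnit (Aᵀ * J * A).det)
    (hAP : IsUnit ((A + P)ᵀ * J * (A + P)).det) :
    ilsX (A + P) J b - ilsX A J b - ilsDeriv A P J b
      = (Aᵀ * J * A)⁻¹ *ᵥ (Pᵀ *ᵥ (J *ᵥ (ilsR (A + P) J b - ilsR A J b))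
          - Aᵀ *ᵥ (J *ᵥ (P *ᵥ (ilsX (A + P) J b - ilsX A J b)))) := by
  set x := ilsX A J b
  set y := ilsX (A + P) J b
  have hy : A *ᵥ y = b - ilsR (A + P) J b - P *ᵥ y := by
    rw [ilsR, add_mulVec]
    abel
  have hr' : Aᵀ *ᵥ (J *ᵥ ilsR (A + P) J b) = -(Pᵀ *ᵥ (J *ᵥ ilsR (A + P) J b)) := by
    rw [eq_neg_iff_add_eq_zero, ← add_mulVec, ← transpose_add]
    exact transpose_mulVec_ilsR b hAP
  have hB : (Aᵀ * J * A) *ᵥ (y - x)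
      = Pᵀ *ᵥ (J *ᵥ ilsR (A + P) J b) - Aᵀ *ᵥ (J *ᵥ (P *ᵥ y)) := by
    rw [mulVec_sub, mulVec_ilsX b hA, ← mulVec_mulVec, ← mulVec_mulVec, hy]
    simp only [mulVec_sub, hr']
    abel
  have hyx : y - x = (Aᵀ * J * A)⁻¹ *ᵥ ((Aᵀ * J * A) *ᵥ (y - x)) := by
    rw [mulVec_mulVec, nonsing_inv_mul _ hA, one_mulVec]
  rw [ilsDeriv, ← mulVec_mulVec, ← mulVec_mulVec]
  conv_lhs => rw [hyx, hB]
  simp only [mulVec_sub]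
  abel

end ILS

section Estimates

variable {m n : ℕ} {A : Matrix (Fin m) (Fin n) ℝ} (P : Matrix (Fin m) (Fin n) ℝ)
  {J : Matrix (Fin m) (Fin m) ℝ} (b : Fin m → ℝ)

lemma IsCoerciveWith.eNorm_ilsX_add_sub_le {c : ℝ}
    (hc : IsCoerciveWith ((A + P)ᵀ * J * (A + P)) c) (hc₀ : 0 < c) (hA : IsUnit (Aᵀ * J * A).det)
    (hAP : IsUnit ((A + P)ᵀ * J * (A + P)).det) (hP : frobNorm P ≤ 1) :
    eNorm (ilsX (A + P) J b - ilsX A J b) ≤ frobNorm J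
      * (eNorm (ilsR A J b) + (frobNorm A + 1) * eNorm (ilsX A J b)) / c * frobNorm P := by
  have hAP_le : frobNorm (A + P)ᵀ ≤ frobNorm A + 1 := by
    rw [frobNorm_transpose]
    linarith [frobNorm_add_le A P]
  have hx := eNorm_mulVec_le_of_le J (eNorm_mulVec_le P (ilsX A J b))
  have hxJ := (eNorm_mulVec_le _ _).trans (mul_le_mul hAP_le hx (eNorm_nonneg _)
    (by linarith [frobNorm_nonneg A]))
  have hr := eNorm_mulVec_le_of_le Pᵀ (eNorm_mulVec_le J (ilsR A J b))
  rw [frobNorm_transpose] at hr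
  rw [div_mul_eq_mul_div, le_div_iff₀ hc₀, mul_comm]
  calc c * eNorm (ilsX (A + P) J b - ilsX A J b)
      ≤ eNorm (((A + P)ᵀ * J * (A + P)) *ᵥ (ilsX (A + P) J b - ilsX A J b)) :=
        hc.mul_eNorm_le _
    _ ≤ frobNorm P * (frobNorm J * eNorm (ilsR A J b))
        + (frobNorm A + 1) * (frobNorm J * (frobNorm P * eNorm (ilsX A J b))) := by
        rw [mulVec_ilsX_add_sub_ilsX P b hA hAP]
        exact (eNorm_sub_le _ _).trans (add_le_add hr hxJ)
    _ = _ := by ring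

lemma eNorm_ilsX_add_sub_sub_ilsDeriv_le {K : ℝ} (hA : IsUnit (Aᵀ * J * A).det)
    (hAP : IsUnit ((A + P)ᵀ * J * (A + P)).det) (hP : frobNorm P ≤ 1) (hK : 0 ≤ K)
    (hyx : eNorm (ilsX (A + P) J b - ilsX A J b) ≤ K * frobNorm P) :
    eNorm (ilsX (A + P) J b - ilsX A J b - ilsDeriv A P J b)
      ≤ frobNorm (Aᵀ * J * A)⁻¹ * frobNorm J
        * (2 * frobNorm A * K + eNorm (ilsX A J b) + K) * frobNorm P ^ 2 := by
  set t := frobNorm P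
  have ht : 0 ≤ t := frobNorm_nonneg P
  have hy : eNorm (ilsX (A + P) J b) ≤ eNorm (ilsX A J b) + K := by
    have := eNorm_add_le (ilsX A J b) (ilsX (A + P) J b - ilsX A J b)
    rw [add_sub_cancel] at this
    nlinarith
  have hr : eNorm (ilsR (A + P) J b - ilsR A J b)
      ≤ frobNorm A * (K * t) + t * (eNorm (ilsX A J b) + K) := by
    rw [ilsR_add_sub_ilsR, eNorm_neg]
    exact (eNorm_add_le _ _).trans
      (add_le_add (eNorm_mulVec_le_of_le A hyx) (eNorm_mulVec_le_of_le P hy))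
  have h₁ := eNorm_mulVec_le_of_le Pᵀ (eNorm_mulVec_le_of_le J hr)
  have h₂ := eNorm_mulVec_le_of_le Aᵀ (eNorm_mulVec_le_of_le J (eNorm_mulVec_le_of_le P hyx))
  rw [frobNorm_transpose] at h₁ h₂
  rw [ilsX_add_sub_sub_ilsDeriv P b hA hAP]
  refine (eNorm_mulVec_le_of_le _ ((eNorm_sub_le _ _).trans (add_le_add h₁ h₂))).trans_eq ?_
  ring

end Estimates

lemma exists_pos_forall_mul_mul_add_le {j a c : ℝ} (hj : 0 ≤ j) (ha : 0 ≤ a) (hc : 0 < c) :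
    ∃ δ > 0, ∀ t, 0 ≤ t → t ≤ δ → t ≤ 1 ∧ j * t * (2 * a + t) ≤ c / 2 := by
  set s := j * (2 * a + 1) + 1
  have hs : 0 < s := by positivity
  refine ⟨min 1 (c / (2 * s)), by positivity, fun t ht htδ => ?_⟩
  have ht1 : t ≤ 1 := htδ.trans (min_le_left _ _)
  have hts : t * s ≤ c / 2 := by
    have := mul_le_mul_of_nonneg_right (htδ.trans (min_le_right _ _)) hs.le
    rwa [div_mul_eq_mul_div, mul_div_mul_right _ _ hs.ne'] at this
  refine ⟨ht1, le_trans ?_ hts⟩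
  nlinarith [mul_nonneg hj ht]

theorem stmt_7_general (m n : ℕ)
    (A : Matrix (Fin m) (Fin n) ℝ) (b : Fin m → ℝ)
    (d : Fin m → ℝ)
    (J : Matrix (Fin m) (Fin m) ℝ) (hJ : J = Matrix.diagonal d)
    (hpd : (Aᵀ * J * A).PosDef) :
    ∃ δ > (0 : ℝ), ∃ η ≥ (0 : ℝ), ∀ P : Matrix (Fin m) (Fin n) ℝ, frobNorm P ≤ δ →
      ((A + P)ᵀ * J * (A + P)).PosDef ∧
      eNorm (ilsX (A + P) J b - ilsX A J b
          - ((Aᵀ * J * A)⁻¹ *ᵥ (Pᵀ *ᵥ (J *ᵥ ilsR A J b))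
            - ((Aᵀ * J * A)⁻¹ * Aᵀ * J) *ᵥ (P *ᵥ ilsX A J b)))
        ≤ (η / 2) * (frobNorm P) ^ 2 := by
  obtain ⟨c, hc, hcoer⟩ := hpd.exists_isCoerciveWith
  have hj := frobNorm_nonneg J
  have ha := frobNorm_nonneg A
  obtain ⟨δ, hδ, hsmall⟩ := exists_pos_forall_mul_mul_add_le hj ha hc
  set K := frobNorm J * (eNorm (ilsR A J b) + (frobNorm A + 1) * eNorm (ilsX A J b)) / (c / 2)
  have hr := eNorm_nonneg (ilsR A J b)
  have hx := eNorm_nonneg (ilsX A J b)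
  have hK : 0 ≤ K := by positivity
  have hB := frobNorm_nonneg (Aᵀ * J * A)⁻¹
  refine ⟨δ, hδ, 2 * (frobNorm (Aᵀ * J * A)⁻¹ * frobNorm J
    * (2 * frobNorm A * K + eNorm (ilsX A J b) + K)), by positivity, fun P hP => ?_⟩
  obtain ⟨hP1, hPc⟩ := hsmall _ (frobNorm_nonneg P) hP
  have hcoerP := (hcoer.transpose_mul_mul_add P).mono (by linarith : c / 2 ≤ _)
  have hsymm : ((A + P)ᵀ * J * (A + P)).IsHermitian := by
    simpa using isHermitian_conjTranspose_mul_mul (A + P) (hJ ▸ isHermitian_diagonal d)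
  have hpdP := hcoerP.posDef (half_pos hc) hsymm
  have hunit := hpd.det_pos.ne'.isUnit
  have hunitP := hpdP.det_pos.ne'.isUnit
  refine ⟨hpdP, ?_⟩
  have hyx := hcoerP.eNorm_ilsX_add_sub_le P b (half_pos hc) hunit hunitP hP1
  exact (eNorm_ilsX_add_sub_sub_ilsDeriv_le P b hunit hunitP hP1 hK hyx).trans_eq (by ring)

/-- Taylor remainder bound: there are `δ > 0` and `η ≥ 0` such that every
perturbation `P` with `‖P‖_F ≤ δ` keeps `(A+P)ᵀJ(A+P)` positive definite and
`‖f(A+P) − f(A) − Df(A)[P]‖₂ ≤ (η/2)‖P‖_F²`. -/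
theorem stmt_7 (m n : ℕ) (hmn : m > n) (hn : n ≥ 1)
    (A : Matrix (Fin m) (Fin n) ℝ) (b : Fin m → ℝ)
    (d : Fin m → ℝ) (hd : ∀ i, d i = 1 ∨ d i = -1)
    (J : Matrix (Fin m) (Fin m) ℝ) (hJ : J = Matrix.diagonal d)
    (hpd : (Aᵀ * J * A).PosDef) :
    ∃ δ > (0 : ℝ), ∃ η ≥ (0 : ℝ), ∀ P : Matrix (Fin m) (Fin n) ℝ, frobNorm P ≤ δ →
      ((A + P)ᵀ * J * (A + P)).PosDef ∧
      eNorm (ilsX (A + P) J b - ilsX A J b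
          - ((Aᵀ * J * A)⁻¹ *ᵥ (Pᵀ *ᵥ (J *ᵥ ilsR A J b))
            - ((Aᵀ * J * A)⁻¹ * Aᵀ * J) *ᵥ (P *ᵥ ilsX A J b)))
        ≤ (η / 2) * (frobNorm P) ^ 2 :=
  stmt_7_general m n A b d J hJ hpd
end

section
/- For 0 < α ≤ π/4, consider the ILS problem with the 3×2 matrix A(α) whose entries are A₁₁ = cos(π/4 − α), A₁₂ = 0, A₂₁ = 0, A₂₂ = 1/α, A₃₁ = sin(π/4 − α), A₃₂ = 0, with b = (1, 1, 1)ᵀ and J = diag(1, 1, −1). Then A(α)ᵀJA(α) = diag(sin(2α), α⁻²) is positive definite, the solution is x(α) = (1/(√2 cos α), α), and the residual r(α) = b − A(α)x(α) satisfies lim_{α→0⁺} ‖x(α)‖₂ = 2^{-1/2} and lim_{α→0⁺} ‖r(α)‖₂ = 2^{-1/2}; moreover lim_{α→0⁺} α·‖(A(α)ᵀJA(α))⁻¹‖₂ = 1/2 and lim_{α→0⁺} α·‖(A(α)ᵀJA(α))⁻¹A(α)ᵀ‖₂ = 1/2. -/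
open Matrix

/-- The 3×2 example matrix of the paper's second example. -/
noncomputable def exA3 (α : ℝ) : Matrix (Fin 3) (Fin 2) ℝ :=
  !![Real.cos (Real.pi / 4 - α), 0;
     0, α⁻¹;
     Real.sin (Real.pi / 4 - α), 0]

/-- The signature matrix `J = diag(1, 1, −1)`. -/
noncomputable def exJ3 : Matrix (Fin 3) (Fin 3) ℝ := !![1, 0, 0; 0, 1, 0; 0, 0, -1]

/-- The right-hand side `b = (1, 1, 1)ᵀ`. -/
noncomputable def exb3 : Fin 3 → ℝ := ![1, 1, 1]

/-!
Since `AᵀJA = diag(sin 2α, α⁻²)` is diagonal, everything is explicit. The solution and the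
residual have closed forms with `‖x‖₂² = 1 / (2 cos² α) + α²` and `‖r‖₂² = 1 / (2 cos² α)`, both
continuous at `α = 0`. The spectral norm of a diagonal matrix is its largest entry in absolute
value, so `‖(AᵀJA)⁻¹‖₂ = max (1 / sin 2α) α²`. For `B = (AᵀJA)⁻¹Aᵀ` the C⋆-identity
`‖B‖₂² = ‖BBᵀ‖₂` together with `AᵀA = diag(1, α⁻²)` gives `BBᵀ = diag(1 / sin² 2α, α²)`, so
`‖B‖₂ = max (1 / sin 2α) α`. Multiplied by `α`, both norms tend to `max (1/2) 0` because
`α / sin 2α → 1/2`.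
-/

open Filter Topology Real

open Matrix.Norms.L2Operator in
theorem specNorm_eq_l2_opNorm {p q : Type*} [Fintype p] [Fintype q] [DecidableEq q]
    (M : Matrix p q ℝ) : specNorm M = ‖M‖ := rfl

theorem specNorm_nonneg {p q : Type*} [Fintype p] [Fintype q] [DecidableEq q]
    (M : Matrix p q ℝ) : 0 ≤ specNorm M :=
  norm_nonneg _

theorem specNorm_diagonal {n : Type*} [Fintype n] [DecidableEq n] (v : n → ℝ) :
    specNorm (diagonal v) = ‖v‖ := by
  rw [specNorm_eq_l2_opNorm, l2_opNorm_diagonal]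

theorem specNorm_mul_transpose_self {p q : Type*} [Fintype p] [DecidableEq p] [Fintype q]
    [DecidableEq q] (M : Matrix p q ℝ) : specNorm (M * Mᵀ) = specNorm M * specNorm M := by
  rw [specNorm_eq_l2_opNorm, specNorm_eq_l2_opNorm, ← l2_opNorm_conjTranspose M,
    ← l2_opNorm_conjTranspose_mul_self, conjTranspose_conjTranspose,
    conjTranspose_eq_transpose_of_trivial]

theorem inv_diagonal_of_ne_zero {n K : Type*} [Fintype n] [DecidableEq n] [Field K] {v : n → K}
    (hv : ∀ i, v i ≠ 0) : (diagonal v)⁻¹ = diagonal v⁻¹ :=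
  inv_eq_left_inv <| by
    rw [diagonal_mul_diagonal, ← diagonal_one]
    congr 1
    ext i
    simp [hv i]

theorem norm_fin_two (a b : ℝ) : ‖![a, b]‖ = max |a| |b| := by
  simp [Pi.norm_def, Fin.univ_succ]

theorem eNorm_fin_two (a b : ℝ) : eNorm ![a, b] = √(a ^ 2 + b ^ 2) := by
  simp [eNorm, Fin.sum_univ_succ]

theorem eNorm_fin_three (a b c : ℝ) : eNorm ![a, b, c] = √(a ^ 2 + b ^ 2 + c ^ 2) := by
  simp [eNorm, Fin.sum_univ_succ, add_assoc]

theorem tendsto_div_sin_two_mul :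
    Tendsto (fun α : ℝ => α / sin (2 * α)) (𝓝[>] 0) (𝓝 (1 / 2)) := by
  have hcont : ContinuousAt (fun α : ℝ => (2 * sinc (2 * α))⁻¹) 0 :=
    ContinuousAt.inv₀ (by fun_prop) (by simp)
  have h : Tendsto (fun α : ℝ => (2 * sinc (2 * α))⁻¹) (𝓝[>] 0) (𝓝 (1 / 2)) := by
    simpa using hcont.continuousWithinAt.tendsto
  refine h.congr' (eventually_nhdsWithin_of_forall fun α (hα : 0 < α) => ?_)
  rw [sinc_of_ne_zero (by positivity)]
  field_simp

theorem tendsto_max_div_sin_two_mul_pow {n : ℕ} (hn : n ≠ 0) :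
    Tendsto (fun α : ℝ => max (α / sin (2 * α)) (α ^ n)) (𝓝[>] 0) (𝓝 (1 / 2)) := by
  have hpow : Tendsto (fun α : ℝ => α ^ n) (𝓝[>] 0) (𝓝 0) :=
    tendsto_nhdsWithin_of_tendsto_nhds ((continuous_pow n).tendsto' 0 0 (zero_pow hn))
  simpa using tendsto_div_sin_two_mul.max hpow

theorem cos_pi_div_four_sub (α : ℝ) : cos (π / 4 - α) = √2 / 2 * (cos α + sin α) := by
  rw [cos_sub, cos_pi_div_four, sin_pi_div_four]
  ring

theorem sin_pi_div_four_sub (α : ℝ) : sin (π / 4 - α) = √2 / 2 * (cos α - sin α) := by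
  rw [sin_sub, cos_pi_div_four, sin_pi_div_four]
  ring

theorem cos_sq_sub_sin_sq_pi_div_four_sub (α : ℝ) :
    cos (π / 4 - α) ^ 2 - sin (π / 4 - α) ^ 2 = sin (2 * α) := by
  rw [← cos_two_mul', show 2 * (π / 4 - α) = π / 2 - 2 * α by ring, cos_pi_div_two_sub]

theorem sin_two_mul_pos {α : ℝ} (h0 : 0 < α) (h2 : α < π / 2) : 0 < sin (2 * α) :=
  sin_pos_of_pos_of_lt_pi (by linarith) (by linarith)

theorem exA3_transpose_mul_exJ3_mul (α : ℝ) :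
    (exA3 α)ᵀ * exJ3 * exA3 α = diagonal ![sin (2 * α), α⁻¹ ^ 2] := by
  rw [← cos_sq_sub_sin_sq_pi_div_four_sub]
  ext i j
  fin_cases i <;> fin_cases j <;>
    simp [exA3, exJ3, mul_apply, Fin.sum_univ_succ, sq, sub_eq_add_neg]

theorem exA3_transpose_mul_self (α : ℝ) :
    (exA3 α)ᵀ * exA3 α = diagonal ![1, α⁻¹ ^ 2] := by
  rw [← sin_sq_add_cos_sq (π / 4 - α)]
  ext i j
  fin_cases i <;> fin_cases j <;>
    simp [exA3, mul_apply, Fin.sum_univ_succ, sq, add_comm]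

theorem posDef_exA3_transpose_mul_exJ3_mul {α : ℝ} (h0 : 0 < α) (h2 : α < π / 2) :
    ((exA3 α)ᵀ * exJ3 * exA3 α).PosDef := by
  rw [exA3_transpose_mul_exJ3_mul, posDef_diagonal_iff]
  intro i
  fin_cases i
  · exact sin_two_mul_pos h0 h2
  · simpa using pow_pos h0 2

theorem inv_exA3_transpose_mul_exJ3_mul {α : ℝ} (h0 : 0 < α) (h2 : α < π / 2) :
    ((exA3 α)ᵀ * exJ3 * exA3 α)⁻¹ = diagonal ![(sin (2 * α))⁻¹, α ^ 2] := by
  have hs := (sin_two_mul_pos h0 h2).ne'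
  rw [exA3_transpose_mul_exJ3_mul, inv_diagonal_of_ne_zero]
  · congr 1
    ext i
    fin_cases i <;> simp
  · intro i
    fin_cases i <;> simp [hs, h0.ne']

theorem ilsX_exA3 {α : ℝ} (h0 : 0 < α) (h2 : α < π / 2) :
    ilsX (exA3 α) exJ3 exb3 = ![1 / (√2 * cos α), α] := by
  have hc : cos α ≠ 0 := (cos_pos_of_mem_Ioo ⟨by linarith, h2⟩).ne'
  have hs : sin α ≠ 0 := (sin_pos_of_pos_of_lt_pi h0 (by linarith)).ne'
  rw [ilsX, inv_exA3_transpose_mul_exJ3_mul h0 h2]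
  ext i
  fin_cases i
  · simp [mulVec, dotProduct, mul_apply, Fin.sum_univ_succ, exA3, exJ3, exb3,
      cos_pi_div_four_sub, sin_pi_div_four_sub, sin_two_mul]
    field_simp
    rw [sq_sqrt zero_le_two]
    ring
  · simp [mulVec, dotProduct, mul_apply, Fin.sum_univ_succ, exA3, exJ3, exb3]
    field_simp

theorem ilsR_exA3 {α : ℝ} (h0 : 0 < α) (h2 : α < π / 2) :
    ilsR (exA3 α) exJ3 exb3 =
      ![(cos α - sin α) / (2 * cos α), 0, (cos α + sin α) / (2 * cos α)] := by
  have hc : cos α ≠ 0 := (cos_pos_of_mem_Ioo ⟨by linarith, h2⟩).ne'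
  rw [ilsR, ilsX_exA3 h0 h2]
  ext i
  fin_cases i <;>
    simp [exA3, exb3, cos_pi_div_four_sub, sin_pi_div_four_sub] <;>
    field_simp <;> ring

theorem eNorm_ilsX_exA3 {α : ℝ} (h0 : 0 < α) (h2 : α < π / 2) :
    eNorm (ilsX (exA3 α) exJ3 exb3) = √((2 * cos α ^ 2)⁻¹ + α ^ 2) := by
  rw [ilsX_exA3 h0 h2, eNorm_fin_two, div_pow, mul_pow, sq_sqrt zero_le_two, one_pow, one_div]

theorem eNorm_ilsR_exA3 {α : ℝ} (h0 : 0 < α) (h2 : α < π / 2) :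
    eNorm (ilsR (exA3 α) exJ3 exb3) = √((2 * cos α ^ 2)⁻¹) := by
  have hc : cos α ≠ 0 := (cos_pos_of_mem_Ioo ⟨by linarith, h2⟩).ne'
  rw [ilsR_exA3 h0 h2, eNorm_fin_three]
  congr 1
  field_simp
  linear_combination 2 * sin_sq_add_cos_sq α

theorem specNorm_inv_exA3_transpose_mul_exJ3_mul {α : ℝ} (h0 : 0 < α) (h2 : α < π / 2) :
    specNorm ((exA3 α)ᵀ * exJ3 * exA3 α)⁻¹ = max (sin (2 * α))⁻¹ (α ^ 2) := by
  rw [inv_exA3_transpose_mul_exJ3_mul h0 h2, specNorm_diagonal, norm_fin_two,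
    abs_of_pos (inv_pos.2 (sin_two_mul_pos h0 h2)), abs_of_nonneg (sq_nonneg α)]

theorem specNorm_inv_exA3_transpose_mul_exJ3_mul_mul_transpose {α : ℝ} (h0 : 0 < α)
    (h2 : α < π / 2) :
    specNorm (((exA3 α)ᵀ * exJ3 * exA3 α)⁻¹ * (exA3 α)ᵀ) = max (sin (2 * α))⁻¹ α := by
  have hs := (inv_pos.2 (sin_two_mul_pos h0 h2)).le
  refine (mul_self_inj (specNorm_nonneg _) (hs.trans (le_max_left _ _))).1 ?_
  have hBBt : ((exA3 α)ᵀ * exJ3 * exA3 α)⁻¹ * (exA3 α)ᵀ *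
      (((exA3 α)ᵀ * exJ3 * exA3 α)⁻¹ * (exA3 α)ᵀ)ᵀ =
      diagonal ![(sin (2 * α))⁻¹ * (sin (2 * α))⁻¹, α * α] := by
    rw [transpose_mul, transpose_transpose, Matrix.mul_assoc, ← Matrix.mul_assoc (exA3 α)ᵀ,
      exA3_transpose_mul_self, inv_exA3_transpose_mul_exJ3_mul h0 h2, diagonal_transpose,
      diagonal_mul_diagonal, diagonal_mul_diagonal]
    congr 1
    ext i
    fin_cases i
    · simp
    · simp only [Fin.mk_one, cons_val_one, cons_val_zero]
      field_simp
  rw [← specNorm_mul_transpose_self, hBBt, specNorm_diagonal, norm_fin_two,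
    abs_of_nonneg (mul_self_nonneg _), abs_of_nonneg (mul_self_nonneg _)]
  rcases le_total (sin (2 * α))⁻¹ α with h | h
  · simp [h, mul_self_le_mul_self hs h]
  · simp [h, mul_self_le_mul_self h0.le h]

theorem tendsto_eNorm_ilsX_exA3 :
    Tendsto (fun α => eNorm (ilsX (exA3 α) exJ3 exb3)) (𝓝[>] 0) (𝓝 (√2)⁻¹) := by
  have hcont : ContinuousAt (fun α : ℝ => √((2 * cos α ^ 2)⁻¹ + α ^ 2)) 0 := by
    fun_prop (disch := simp)
  have h : Tendsto (fun α : ℝ => √((2 * cos α ^ 2)⁻¹ + α ^ 2)) (𝓝[>] 0) (𝓝 (√2)⁻¹) := by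
    simpa using hcont.continuousWithinAt.tendsto
  refine h.congr' ?_
  filter_upwards [Ioo_mem_nhdsGT pi_div_two_pos] with α ⟨h0, h2⟩
  exact (eNorm_ilsX_exA3 h0 h2).symm

theorem tendsto_eNorm_ilsR_exA3 :
    Tendsto (fun α => eNorm (ilsR (exA3 α) exJ3 exb3)) (𝓝[>] 0) (𝓝 (√2)⁻¹) := by
  have hcont : ContinuousAt (fun α : ℝ => √((2 * cos α ^ 2)⁻¹)) 0 := by
    fun_prop (disch := simp)
  have h : Tendsto (fun α : ℝ => √((2 * cos α ^ 2)⁻¹)) (𝓝[>] 0) (𝓝 (√2)⁻¹) := by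
    simpa using hcont.continuousWithinAt.tendsto
  refine h.congr' ?_
  filter_upwards [Ioo_mem_nhdsGT pi_div_two_pos] with α ⟨h0, h2⟩
  exact (eNorm_ilsR_exA3 h0 h2).symm

theorem tendsto_mul_specNorm_inv_exA3_transpose_mul_exJ3_mul :
    Tendsto (fun α => α * specNorm ((exA3 α)ᵀ * exJ3 * exA3 α)⁻¹) (𝓝[>] 0) (𝓝 (1 / 2)) := by
  refine (tendsto_max_div_sin_two_mul_pow three_ne_zero).congr' ?_
  filter_upwards [Ioo_mem_nhdsGT pi_div_two_pos] with α ⟨h0, h2⟩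
  rw [specNorm_inv_exA3_transpose_mul_exJ3_mul h0 h2, mul_max_of_nonneg _ _ h0.le,
    div_eq_mul_inv, pow_succ']

theorem tendsto_mul_specNorm_inv_exA3_transpose_mul_exJ3_mul_mul_transpose :
    Tendsto (fun α => α * specNorm (((exA3 α)ᵀ * exJ3 * exA3 α)⁻¹ * (exA3 α)ᵀ))
      (𝓝[>] 0) (𝓝 (1 / 2)) := by
  refine (tendsto_max_div_sin_two_mul_pow two_ne_zero).congr' ?_
  filter_upwards [Ioo_mem_nhdsGT pi_div_two_pos] with α ⟨h0, h2⟩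
  rw [specNorm_inv_exA3_transpose_mul_exJ3_mul_mul_transpose h0 h2,
    mul_max_of_nonneg _ _ h0.le, div_eq_mul_inv, sq]

open Filter Topology in
/-- Second example of the paper: exact formulas for `AᵀJA` and the solution,
and the asymptotics of `‖x‖₂`, `‖r‖₂`, `‖(AᵀJA)⁻¹‖₂`, `‖(AᵀJA)⁻¹Aᵀ‖₂`
as `α → 0⁺`. -/
theorem stmt_15 :
    (∀ α : ℝ, 0 < α → α ≤ Real.pi / 4 →
      (exA3 α)ᵀ * exJ3 * exA3 α = Matrix.diagonal ![Real.sin (2 * α), (α⁻¹) ^ 2] ∧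
      ((exA3 α)ᵀ * exJ3 * exA3 α).PosDef ∧
      ilsX (exA3 α) exJ3 exb3 = ![1 / (Real.sqrt 2 * Real.cos α), α]) ∧
    Tendsto (fun α : ℝ => eNorm (ilsX (exA3 α) exJ3 exb3))
      (𝓝[>] 0) (𝓝 ((Real.sqrt 2)⁻¹)) ∧
    Tendsto (fun α : ℝ => eNorm (ilsR (exA3 α) exJ3 exb3))
      (𝓝[>] 0) (𝓝 ((Real.sqrt 2)⁻¹)) ∧
    Tendsto (fun α : ℝ => α * specNorm (((exA3 α)ᵀ * exJ3 * exA3 α)⁻¹))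
      (𝓝[>] 0) (𝓝 (1 / 2)) ∧
    Tendsto (fun α : ℝ => α * specNorm ((((exA3 α)ᵀ * exJ3 * exA3 α)⁻¹) * (exA3 α)ᵀ))
      (𝓝[>] 0) (𝓝 (1 / 2)) := by
  refine ⟨fun α h0 hα => ?_, tendsto_eNorm_ilsX_exA3, tendsto_eNorm_ilsR_exA3,
    tendsto_mul_specNorm_inv_exA3_transpose_mul_exJ3_mul,
    tendsto_mul_specNorm_inv_exA3_transpose_mul_exJ3_mul_mul_transpose⟩
  have h2 : α < π / 2 := by linarith [pi_pos]
  exact ⟨exA3_transpose_mul_exJ3_mul α, posDef_exA3_transpose_mul_exJ3_mul h0 h2,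
    ilsX_exA3 h0 h2⟩
end
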